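/- The family of univariate t-distribution densities {f_{ν,μ,σ} : ν a positive integer, μ ∈ ℝ, σ > 0}, where f_{ν,μ,σ}(x) = c_{ν,μ,σ} (1 + (x−μ)²/(νσ²))^{−(ν+1)/2} with c_{ν,μ,σ} the normalizing constant making ∫_ℝ f_{ν,μ,σ}(x) dx = 1, is linearly independent: if (ν₁,μ₁,σ₁),…,(νₙ,μₙ,σₙ) are distinct parameter triples and λ₁,…,λₙ are real numbers with Σⱼ λⱼ f_{νⱼ,μⱼ,σⱼ}(x) = 0 for all x ∈ ℝ, then all λⱼ = 0. -/

import Mathlib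

/-!
The `t`-shape is `x ↦ (1 + (x - μ)² / b) ^ (-p)` with `b = νσ²` and `p = (ν + 1) / 2`. Such a
shape continues holomorphically to the strip `|Im z| < √b`, with branch points at `μ ± i√b`. A vanishing real combination therefore vanishes
on the strip below the lowest branch point `μ_k + i√b_k`. Approach that point vertically, so that
`u = 1 + (z - μ_k)² / b_k ↓ 0`: the term that shares the branch point and has the largest exponent
`p_k` grows like `u ^ (-p_k)`, and all other terms are `o(u ^ (-p_k))`. Hence its coefficient
vanishes, so no combination with nonzero coefficients can vanish.
-/

open Real MeasureTheory

/-- The (unnormalized) shape of the univariate `t`-density with `ν` degrees of freedom,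
location `μ` and scale `σ`. -/
noncomputable def tShape (ν : ℕ) (μ σ x : ℝ) : ℝ :=
  (1 + (x - μ) ^ 2 / (ν * σ ^ 2)) ^ (-(((ν : ℝ) + 1) / 2))

open Complex Filter Topology Function

lemma Finset.exists_minimal_scale_maximal_exponent {ι : Type*} {s : Finset ι} (hs : s.Nonempty)
    (μ b p : ι → ℝ) :
    ∃ k ∈ s, ∀ i ∈ s, b k ≤ b i ∧ (b i = b k → μ i = μ k → p i ≤ p k) := by
  obtain ⟨k, hks, hk⟩ := s.exists_min_image (fun i => toLex (b i, toLex (μ i, -p i))) hs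
  refine ⟨k, hks, fun i hi => ?_⟩
  have := hk i hi
  simp only [Prod.Lex.toLex_le_toLex] at this
  grind

noncomputable def pearsonVII (μ b p x : ℝ) : ℝ := (1 + (x - μ) ^ 2 / b) ^ (-p)

noncomputable def cpearsonVII (μ b p : ℝ) (z : ℂ) : ℂ := (1 + (z - μ) ^ 2 / b) ^ (-(p : ℂ))

section

variable {μ b p : ℝ}

lemma cpearsonVII_ofReal (hb : 0 ≤ b) (x : ℝ) : cpearsonVII μ b p x = pearsonVII μ b p x := by
  have hbase : (0 : ℝ) ≤ 1 + (x - μ) ^ 2 / b := by positivity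
  rw [pearsonVII, ofReal_cpow hbase]
  push_cast [cpearsonVII]
  rfl

lemma re_one_add_sq_div (z : ℂ) :
    (1 + (z - μ) ^ 2 / b).re = 1 + ((z.re - μ) ^ 2 - z.im ^ 2) / b := by
  simp [sq, div_ofReal_re]

lemma im_one_add_sq_div (z : ℂ) :
    (1 + (z - μ) ^ 2 / b).im = 2 * (z.re - μ) * z.im / b := by
  simp [sq, div_ofReal_im]
  ring

lemma one_add_sq_div_mem_slitPlane_of_im_sq_lt (hb : 0 < b) {z : ℂ} (hz : z.im ^ 2 < b) :
    1 + (z - μ) ^ 2 / b ∈ slitPlane := by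
  refine mem_slitPlane_iff.2 (Or.inl ?_)
  rw [re_one_add_sq_div, sub_div]
  have : z.im ^ 2 / b < 1 := (div_lt_one hb).2 hz
  have : 0 ≤ (z.re - μ) ^ 2 / b := by positivity
  linarith

lemma one_add_sq_div_mem_slitPlane_of_re_ne (hb : 0 < b) {z : ℂ} (hre : z.re ≠ μ)
    (him : z.im ≠ 0) : 1 + (z - μ) ^ 2 / b ∈ slitPlane := by
  refine mem_slitPlane_iff.2 (Or.inr ?_)
  rw [im_one_add_sq_div]
  have := sub_ne_zero.2 hre
  have := hb.ne'
  positivity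

lemma one_add_sq_div_mem_slitPlane_of_le {B μ' : ℝ} (hB : 0 < B) (hBb : B ≤ b)
    (hne : B = b → μ' ≠ μ) : 1 + ((μ' : ℂ) + I * √B - μ) ^ 2 / b ∈ slitPlane := by
  rcases hBb.lt_or_eq with hlt | rfl
  · exact one_add_sq_div_mem_slitPlane_of_im_sq_lt (hB.trans hlt) (by simpa [sq_sqrt hB.le])
  · exact one_add_sq_div_mem_slitPlane_of_re_ne hB (by simpa using hne rfl)
      (by simpa using (sqrt_pos.2 hB).ne')

lemma differentiableAt_cpearsonVII {z : ℂ} (hz : 1 + (z - μ) ^ 2 / b ∈ slitPlane) :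
    DifferentiableAt ℂ (cpearsonVII μ b p) z := by
  unfold cpearsonVII
  fun_prop (disch := assumption)

lemma cpearsonVII_vertical (hb : 0 < b) {u : ℝ} (hu : u ≤ 1) :
    cpearsonVII μ b p (μ + I * √(b * (1 - u))) = (u : ℂ) ^ (-(p : ℂ)) := by
  have hsq : ((√(b * (1 - u)) : ℝ) : ℂ) ^ 2 = b * (1 - u) := by
    rw [← ofReal_pow, sq_sqrt (by nlinarith)]; push_cast; rfl
  have hb' : (b : ℂ) ≠ 0 := ofReal_ne_zero.2 hb.ne'
  rw [cpearsonVII, add_sub_cancel_left, mul_pow, I_sq, hsq]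
  congr 1
  field_simp
  ring

lemma cpow_mul_cpearsonVII_vertical (hb : 0 < b) {u : ℝ} (hu₀ : 0 < u) (hu₁ : u ≤ 1) :
    (u : ℂ) ^ (p : ℂ) * cpearsonVII μ b p (μ + I * √(b * (1 - u))) = 1 := by
  rw [cpearsonVII_vertical hb hu₁, cpow_neg,
    mul_inv_cancel₀ (cpow_ne_zero_iff.2 (Or.inl (ofReal_ne_zero.2 hu₀.ne')))]

variable {ι : Type*} {s : Finset ι} {μ b p d : ι → ℝ}

lemma sum_cpearsonVII_eq_zero_of_im_sq_lt {B : ℝ} (hB : 0 < B) (hBb : ∀ i ∈ s, B ≤ b i)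
    (h : ∀ x : ℝ, ∑ i ∈ s, d i * pearsonVII (μ i) (b i) (p i) x = 0) {z : ℂ}
    (hz : z.im ^ 2 < B) : ∑ i ∈ s, (d i : ℂ) * cpearsonVII (μ i) (b i) (p i) z = 0 := by
  set F := fun z : ℂ => ∑ i ∈ s, (d i : ℂ) * cpearsonVII (μ i) (b i) (p i) z
  have hstrip : {z : ℂ | z.im ^ 2 < B} = im ⁻¹' Set.Ioo (-√B) √B := by
    ext; simp [Real.sq_lt]
  have hF : AnalyticOnNhd ℂ F {z : ℂ | z.im ^ 2 < B} := by
    refine DifferentiableOn.analyticOnNhd (fun w hw => ?_)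
      (hstrip ▸ isOpen_Ioo.preimage continuous_im)
    refine (DifferentiableAt.fun_sum fun i hi => ?_).differentiableWithinAt
    exact (differentiableAt_cpearsonVII (one_add_sq_div_mem_slitPlane_of_im_sq_lt
      (hB.trans_le (hBb i hi)) (lt_of_lt_of_le hw (hBb i hi)))).const_mul _
  have hreal : ∀ x : ℝ, F x = 0 := fun x => by
    rw [← ofReal_zero, ← h x]
    push_cast
    exact Finset.sum_congr rfl fun i hi => by rw [cpearsonVII_ofReal (hB.le.trans (hBb i hi))]
  have hfreq : ∃ᶠ w in 𝓝[≠] (0 : ℂ), F w = 0 := by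
    have : Tendsto ((↑) : ℝ → ℂ) (𝓝[≠] 0) (𝓝[≠] 0) :=
      continuous_ofReal.continuousWithinAt.tendsto_nhdsWithin fun x hx => by simpa using hx
    exact this.frequently (Frequently.of_forall hreal)
  exact hF.eqOn_zero_of_preconnected_of_frequently_eq_zero
    (hstrip ▸ ((convex_Ioo _ _).linear_preimage imLm).isPreconnected) (by simpa using hB) hfreq hz

lemma tendsto_ofReal_cpow_nhdsGT_zero {q : ℝ} (hq : 0 < q) :
    Tendsto (fun u : ℝ => (u : ℂ) ^ (q : ℂ)) (𝓝[>] 0) (𝓝 0) := by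
  have hcont : ContinuousAt (fun z : ℂ => z ^ (q : ℂ)) 0 :=
    continuousAt_cpow_const_of_re_pos (Or.inl le_rfl) (by simpa using hq)
  have := hcont.tendsto.comp (continuous_ofReal.tendsto' 0 0 ofReal_zero)
  simpa [Function.comp_def, zero_cpow (ofReal_ne_zero.2 hq.ne')] using this.mono_left
    nhdsWithin_le_nhds

lemma tendsto_cpow_mul_cpearsonVII_vertical {μ₀ b₀ p₀ q : ℝ} (hb : 0 < b₀) (hpq : p₀ < q) :
    Tendsto (fun u : ℝ => (u : ℂ) ^ (q : ℂ) * cpearsonVII μ₀ b₀ p₀ (μ₀ + I * √(b₀ * (1 - u))))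
      (𝓝[>] 0) (𝓝 0) := by
  refine (tendsto_ofReal_cpow_nhdsGT_zero (sub_pos.2 hpq)).congr' ?_
  filter_upwards [Ioo_mem_nhdsGT one_pos] with u hu
  rw [cpearsonVII_vertical hb hu.2.le, ← cpow_add _ _ (ofReal_ne_zero.2 hu.1.ne')]
  push_cast
  ring_nf

lemma tendsto_cpow_mul_of_continuousAt {q : ℝ} (hq : 0 < q) {f : ℂ → ℂ} {γ : ℝ → ℂ}
    (hf : ContinuousAt f (γ 0)) (hγ : ContinuousAt γ 0) :
    Tendsto (fun u : ℝ => (u : ℂ) ^ (q : ℂ) * f (γ u)) (𝓝[>] 0) (𝓝 0) := by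
  simpa using (tendsto_ofReal_cpow_nhdsGT_zero hq).mul
    ((hf.comp hγ).tendsto.mono_left nhdsWithin_le_nhds)

lemma tendsto_cpow_mul_cpearsonVII_of_dominant {μ₀ b₀ p₀ μ₁ b₁ p₁ : ℝ} (hb₀ : 0 < b₀)
    (hp₀ : 0 < p₀) (hb : b₀ ≤ b₁) (hp : b₁ = b₀ → μ₁ = μ₀ → p₁ < p₀) :
    Tendsto (fun u : ℝ => (u : ℂ) ^ (p₀ : ℂ) * cpearsonVII μ₁ b₁ p₁ (μ₀ + I * √(b₀ * (1 - u))))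
      (𝓝[>] 0) (𝓝 0) := by
  by_cases hsame : b₁ = b₀ ∧ μ₁ = μ₀
  · obtain ⟨rfl, rfl⟩ := hsame
    exact tendsto_cpow_mul_cpearsonVII_vertical hb₀ (hp rfl rfl)
  · have hslit := one_add_sq_div_mem_slitPlane_of_le (μ := μ₁) (μ' := μ₀) hb₀ hb
      fun h h' => hsame ⟨h.symm, h'.symm⟩
    refine tendsto_cpow_mul_of_continuousAt hp₀
      (differentiableAt_cpearsonVII (by simpa using hslit)).continuousAt (by fun_prop)

lemma exists_eq_zero_of_sum_pearsonVII_eq_zero (hs : s.Nonempty) (hb : ∀ i, 0 < b i)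
    (hp : ∀ i, 0 < p i) (hinj : Injective fun i => (μ i, b i, p i))
    (h : ∀ x : ℝ, ∑ i ∈ s, d i * pearsonVII (μ i) (b i) (p i) x = 0) : ∃ k ∈ s, d k = 0 := by
  classical
  obtain ⟨k, hks, hk⟩ := Finset.exists_minimal_scale_maximal_exponent hs μ b p
  set γ : ℝ → ℂ := fun u => μ k + I * √(b k * (1 - u))
  set Φ : ℝ → ℂ := fun u =>
    (u : ℂ) ^ (p k : ℂ) * ∑ i ∈ s, (d i : ℂ) * cpearsonVII (μ i) (b i) (p i) (γ u)
  have hΦ_zero : Φ =ᶠ[𝓝[>] 0] fun _ => 0 := by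
    filter_upwards [Ioo_mem_nhdsGT one_pos] with u hu
    have hγ : (γ u).im ^ 2 < b k := by
      have : 0 ≤ b k * (1 - u) := mul_nonneg (hb k).le (by linarith [hu.2])
      simp [γ, sq_sqrt this]
      nlinarith [hb k, hu.1]
    simp only [Φ, sum_cpearsonVII_eq_zero_of_im_sq_lt (hb k) (fun i hi => (hk i hi).1) h hγ,
      mul_zero]
  have hterm : ∀ i ∈ s, Tendsto
      (fun u : ℝ => (d i : ℂ) * ((u : ℂ) ^ (p k : ℂ) * cpearsonVII (μ i) (b i) (p i) (γ u)))
      (𝓝[>] 0) (𝓝 (if i = k then (d k : ℂ) else 0)) := by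
    intro i hi
    split_ifs with hik
    · subst hik
      refine tendsto_const_nhds.congr' ?_
      filter_upwards [Ioo_mem_nhdsGT one_pos] with u hu
      rw [cpow_mul_cpearsonVII_vertical (hb i) hu.1 hu.2.le, mul_one]
    · have hlt : b i = b k → μ i = μ k → p i < p k := fun hbi hμi =>
        ((hk i hi).2 hbi hμi).lt_of_ne fun hpi => hik (hinj (by simp [hbi, hμi, hpi]))
      simpa using (tendsto_cpow_mul_cpearsonVII_of_dominant (hb k) (hp k) (hk i hi).1 hlt).const_mul
        (d i : ℂ)
  have hΦ_lim : Tendsto Φ (𝓝[>] 0) (𝓝 (d k)) := by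
    have := tendsto_finsetSum s hterm
    rw [Finset.sum_ite_eq' s k, if_pos hks] at this
    refine this.congr fun u => ?_
    simp only [Φ, Finset.mul_sum]
    exact Finset.sum_congr rfl fun i _ => by ring
  exact ⟨k, hks, ofReal_eq_zero.1
    (tendsto_nhds_unique hΦ_lim (tendsto_const_nhds.congr' hΦ_zero.symm))⟩

theorem linearIndependent_pearsonVII (hb : ∀ i, 0 < b i) (hp : ∀ i, 0 < p i)
    (hinj : Injective fun i => (μ i, b i, p i)) :
    LinearIndependent ℝ fun i => pearsonVII (μ i) (b i) (p i) := by
  classical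
  refine linearIndependent_iff'.2 fun s g hg i hi => ?_
  by_contra hgi
  obtain ⟨k, hk, hgk⟩ := exists_eq_zero_of_sum_pearsonVII_eq_zero (s := s.filter (g · ≠ 0))
    ⟨i, Finset.mem_filter.2 ⟨hi, hgi⟩⟩ hb hp hinj fun x => by
      rw [Finset.sum_filter_of_ne fun j _ hj => left_ne_zero_of_mul hj]
      simpa using congrFun hg x
  exact (Finset.mem_filter.1 hk).2 hgk

end

theorem linearIndependent_tShape {ι : Type*} {ν : ι → ℕ} {μ σ : ι → ℝ} (hν : ∀ i, 0 < ν i)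
    (hσ : ∀ i, 0 < σ i) (hinj : Injective fun i => (ν i, μ i, σ i)) :
    LinearIndependent ℝ fun i => tShape (ν i) (μ i) (σ i) := by
  refine linearIndependent_pearsonVII (b := fun i => ν i * σ i ^ 2) (p := fun i => (ν i + 1) / 2)
    (fun i => mul_pos (Nat.cast_pos.2 (hν i)) (pow_pos (hσ i) 2)) (fun i => by positivity)
    fun i j hij => hinj ?_
  simp only [Prod.mk.injEq] at hij ⊢
  obtain ⟨hμ, hb, hp⟩ := hij
  have hνij : ν i = ν j := by exact_mod_cast (by linarith : (ν i : ℝ) = ν j)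
  have hν0 : (ν j : ℝ) ≠ 0 := by exact_mod_cast (hν j).ne'
  rw [hνij] at hb
  exact ⟨hνij, hμ, (pow_left_inj₀ (hσ i).le (hσ j).le two_ne_zero).1 (mul_left_cancel₀ hν0 hb)⟩

theorem tDensity_linearIndependent_general (n : ℕ) (ν : Fin n → ℕ) (μ σ : Fin n → ℝ)
    (hν : ∀ j, 0 < ν j) (hσ : ∀ j, 0 < σ j)
    (hdist : Function.Injective fun j => (ν j, μ j, σ j))
    (c : Fin n → ℝ) (hc : ∀ j, 0 < c j)
    (lam : Fin n → ℝ)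
    (h : ∀ x : ℝ, ∑ j, lam j * (c j * tShape (ν j) (μ j) (σ j) x) = 0) :
    ∀ j, lam j = 0 := by
  intro j
  have hcoeff := Fintype.linearIndependent_iff.1 (linearIndependent_tShape hν hσ hdist)
    (fun i => lam i * c i) (funext fun x => by simpa [mul_assoc] using h x) j
  exact (mul_eq_zero.1 hcoeff).resolve_right (hc j).ne'

/-- The family of univariate `t`-distribution densities
`f_{ν,μ,σ}(x) = c_{ν,μ,σ} (1 + (x−μ)²/(νσ²))^{−(ν+1)/2}` (with `c_{ν,μ,σ}` the
normalizing constant) is linearly independent. -/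
theorem tDensity_linearIndependent (n : ℕ) (ν : Fin n → ℕ) (μ σ : Fin n → ℝ)
    (hν : ∀ j, 0 < ν j) (hσ : ∀ j, 0 < σ j)
    (hdist : Function.Injective fun j => (ν j, μ j, σ j))
    (c : Fin n → ℝ) (hc : ∀ j, 0 < c j)
    (hnorm : ∀ j, ∫ x : ℝ, c j * tShape (ν j) (μ j) (σ j) x = 1)
    (lam : Fin n → ℝ)
    (h : ∀ x : ℝ, ∑ j, lam j * (c j * tShape (ν j) (μ j) (σ j) x) = 0) :
    ∀ j, lam j = 0 :=
  tDensity_linearIndependent_general n ν μ σ hν hσ hdist c hc lam h
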